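/- Let b₁,...,bₙ ∈ ℝ^m be an LLL-reduced basis of the lattice L, let 1 ≤ k ≤ n, and let d₁,...,d_k be arbitrary linearly independent vectors in L. Then ‖b₁‖·‖b₂‖⋯‖b_k‖ ≤ 2^{k(n−k)/2 + k(k−1)/4} · det L(d₁,...,d_k). -/

import Mathlib

open scoped BigOperators RealInnerProductSpace

/-- The Gram–Schmidt orthogonalization `b₁*, …, bₙ*` of the vectors `b₁, …, bₙ`:
`bᵢ* = bᵢ - ∑_{j<i} μᵢⱼ bⱼ*`. -/
noncomputable def gso {m n : ℕ} (b : Fin n → EuclideanSpace ℝ (Fin m)) :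
    Fin n → EuclideanSpace ℝ (Fin m) :=
  haveI : WellFoundedLT (Fin n) := inferInstance
  InnerProductSpace.gramSchmidt ℝ b

/-- The Gram–Schmidt coefficient `μᵢⱼ = ⟨bᵢ, bⱼ*⟩ / ⟨bⱼ*, bⱼ*⟩`. -/
noncomputable def mu {m n : ℕ} (b : Fin n → EuclideanSpace ℝ (Fin m)) (i j : Fin n) : ℝ :=
  ⟪b i, gso b j⟫ / ⟪gso b j, gso b j⟫

/-- `b₁, …, bₙ` is LLL-reduced: `|μⱼᵢ| ≤ 1/2` for `i < j`, and the exchange condition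
`‖bⱼ* + μ_{j,j-1} b_{j-1}*‖² ≥ (3/4) ‖b_{j-1}*‖²` for consecutive indices `i + 1 = j`. -/
def LLLReduced {m n : ℕ} (b : Fin n → EuclideanSpace ℝ (Fin m)) : Prop :=
  (∀ i j : Fin n, i < j → |mu b j i| ≤ 1 / 2) ∧
  (∀ i j : Fin n, (i : ℕ) + 1 = (j : ℕ) →
    (3 / 4 : ℝ) * ‖gso b i‖ ^ 2 ≤ ‖gso b j + mu b j i • gso b i‖ ^ 2)

/-- Membership in the lattice generated by `b₁, …, bₙ`: an integer linear combination. -/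
def inLattice {m n : ℕ} (b : Fin n → EuclideanSpace ℝ (Fin m))
    (x : EuclideanSpace ℝ (Fin m)) : Prop :=
  ∃ c : Fin n → ℤ, x = ∑ i, (c i : ℝ) • b i

/-- The determinant of the lattice generated by `d₁, …, d_k`:
`√(det DᵀD)`, i.e. the square root of the Gram determinant. -/
noncomputable def latticeDet {m k : ℕ} (d : Fin k → EuclideanSpace ℝ (Fin m)) : ℝ :=
  Real.sqrt (Matrix.det (Matrix.of fun i j => ⟪d i, d j⟫))

/-!
Write `d = C b` with an integer coefficient matrix `C`. Integer row shears preserve the Gram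
determinant, and they bring `C` to a row echelon form `C'` with pivot columns `t₀ < ⋯ < t_{k-1}`
(Euclid's algorithm on the last nonzero column, then induction on the number of rows). For
`e = C' b`, `det L(d) = ∏ ‖e_j*‖`, and `‖e_j*‖ ≥ ‖b_{t_j}*‖` by Cauchy–Schwarz, because
`⟪e_j*, b_{t_j}*⟫` is the nonzero integer `C'_{j t_j}` times `‖b_{t_j}*‖²`. For an LLL-reduced
basis `2^i ‖b_i*‖²` is nondecreasing and `‖b_i‖² ≤ 2^i ‖b_i*‖²`; since `j ≤ t_j ≤ n - k + j`,
this gives `‖b_j‖² ≤ 2^{t_j} ‖b_{t_j}*‖² ≤ 2^{n-k+j} ‖e_j*‖²`, and the product over `j` is the claim.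
-/

open Finset Matrix InnerProductSpace Function

theorem Matrix.gram_sum_smul {ι κ E : Type*} [Fintype κ] [NormedAddCommGroup E]
    [InnerProductSpace ℝ E] (A : Matrix ι κ ℝ) (v : κ → E) :
    gram ℝ (fun i => ∑ l, A i l • v l) = A * gram ℝ v * Aᵀ := by
  ext i j
  simp only [gram_apply, sum_inner, inner_sum, real_inner_smul_left, real_inner_smul_right,
    mul_apply, transpose_apply, Finset.sum_mul]
  exact Finset.sum_congr rfl fun _ _ => Finset.sum_congr rfl fun _ _ => by ring

theorem Matrix.det_gram_update_add_smul {ι E : Type*} [Fintype ι] [DecidableEq ι]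
    [NormedAddCommGroup E] [InnerProductSpace ℝ E] (v : ι → E) {i j : ι} (hij : i ≠ j) (r : ℝ) :
    (gram ℝ (update v i (v i + r • v j))).det = (gram ℝ v).det := by
  have hv : update v i (v i + r • v j) =
      fun l => ∑ l', transvection i j r l l' • v l' := by
    ext1 l
    rcases eq_or_ne l i with rfl | hl
    · simp [transvection, add_smul, Finset.sum_add_distrib, single_apply, one_apply]
    · simp [transvection, one_apply, hl, Ne.symm hl]
  rw [hv, gram_sum_smul, det_mul, det_mul, det_transpose, det_transvection_of_ne _ _ hij r,
    one_mul, mul_one]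

section GramSchmidt

variable {m n : ℕ} (b : Fin n → EuclideanSpace ℝ (Fin m))

theorem gso_orthogonal {i j : Fin n} (h : i ≠ j) : ⟪gso b i, gso b j⟫ = 0 :=
  gramSchmidt_orthogonal ℝ b h

theorem inner_gso_eq_zero_of_lt {i j : Fin n} (h : i < j) : ⟪b i, gso b j⟫ = 0 := by
  rw [real_inner_comm]
  exact gramSchmidt_inv_triangular ℝ b h

noncomputable def gsoCoeff : Matrix (Fin n) (Fin n) ℝ :=
  of fun i l => if l < i then mu b i l else if l = i then 1 else 0

theorem sum_gsoCoeff {M : Type*} [AddCommMonoid M] (g : ℝ → Fin n → M) (hg : ∀ l, g 0 l = 0)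
    (i : Fin n) : ∑ l, g (gsoCoeff b i l) l = g 1 i + ∑ l ∈ Iio i, g (mu b i l) l := by
  have hR : ∀ l, g (gsoCoeff b i l) l =
      (if l = i then g 1 l else 0) + if l < i then g (mu b i l) l else 0 := by
    intro l
    rcases lt_trichotomy l i with h | rfl | h
    · simp [gsoCoeff, h, h.ne]
    · simp [gsoCoeff]
    · simp [gsoCoeff, h.not_gt, h.ne', hg]
  rw [sum_congr rfl fun l _ => hR l, sum_add_distrib, sum_ite_eq', if_pos (mem_univ i),
    ← sum_filter, filter_gt_eq_Iio]

theorem sum_gsoCoeff_smul_gso (i : Fin n) : ∑ l, gsoCoeff b i l • gso b l = b i := by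
  rw [sum_gsoCoeff b (fun r l => r • gso b l) (fun _ => zero_smul _ _), one_smul]
  conv_rhs => rw [gramSchmidt_def'' ℝ b i]
  refine congrArg _ (sum_congr rfl fun l _ => ?_)
  rw [mu, real_inner_comm, real_inner_self_eq_norm_sq]
  rfl

theorem det_gsoCoeff : (gsoCoeff b).det = 1 := by
  rw [det_of_isLowerTriangular _ fun i l (h : i < l) => by simp [gsoCoeff, h.not_gt, h.ne']]
  exact prod_eq_one fun i _ => by simp [gsoCoeff]

theorem gram_gso : gram ℝ (gso b) = diagonal fun l => ‖gso b l‖ ^ 2 := by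
  ext i j
  rcases eq_or_ne i j with rfl | h
  · simp [gram_apply]
  · simp [gram_apply, gso_orthogonal b h, h]

theorem gram_eq_gsoCoeff_mul :
    gram ℝ b = gsoCoeff b * diagonal (fun l => ‖gso b l‖ ^ 2) * (gsoCoeff b)ᵀ := by
  conv_lhs => rw [← funext (sum_gsoCoeff_smul_gso b)]
  rw [gram_sum_smul, gram_gso]

theorem det_gram_eq_prod_norm_gso_sq : (gram ℝ b).det = ∏ l, ‖gso b l‖ ^ 2 := by
  rw [gram_eq_gsoCoeff_mul, det_mul, det_mul, det_transpose, det_gsoCoeff, det_diagonal,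
    one_mul, mul_one]

theorem latticeDet_eq_prod_norm_gso : latticeDet b = ∏ l, ‖gso b l‖ := by
  rw [latticeDet, ← gram, det_gram_eq_prod_norm_gso_sq, prod_pow,
    Real.sqrt_sq (prod_nonneg fun _ _ => norm_nonneg _)]

theorem norm_sq_eq_norm_gso_sq_add_sum (i : Fin n) :
    ‖b i‖ ^ 2 = ‖gso b i‖ ^ 2 + ∑ l ∈ Iio i, mu b i l ^ 2 * ‖gso b l‖ ^ 2 := by
  have h := congr_fun₂ (gram_eq_gsoCoeff_mul b) i i
  rw [gram_apply, real_inner_self_eq_norm_sq, mul_apply] at h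
  rw [h]
  simp only [mul_diagonal, transpose_apply]
  rw [sum_gsoCoeff b (fun r l => r * ‖gso b l‖ ^ 2 * r) (fun _ => by ring)]
  simp only [one_mul, mul_one]
  exact congrArg _ (sum_congr rfl fun l _ => by ring)

theorem inner_gso_self (i : Fin n) : ⟪b i, gso b i⟫ = ‖gso b i‖ ^ 2 := by
  rw [← sum_gsoCoeff_smul_gso b i, sum_inner, sum_eq_single i]
  · simp [gsoCoeff]
  · intro l _ hl
    rw [real_inner_smul_left, gso_orthogonal b hl, mul_zero]
  · simp

end GramSchmidt

namespace LLLReduced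

variable {m n : ℕ} {b : Fin n → EuclideanSpace ℝ (Fin m)} (hred : LLLReduced b)
include hred

theorem mu_sq_le {i j : Fin n} (h : i < j) : mu b j i ^ 2 ≤ 1 / 4 := by
  have := abs_le.mp (hred.1 i j h)
  nlinarith

theorem norm_gso_sq_le_two_mul {i j : Fin n} (h : (i : ℕ) + 1 = j) :
    ‖gso b i‖ ^ 2 ≤ 2 * ‖gso b j‖ ^ 2 := by
  have hij : i < j := Fin.lt_def.mpr (by omega)
  have hlovasz := hred.2 i j h
  rw [norm_add_sq_real, real_inner_smul_right, real_inner_comm, gso_orthogonal b hij.ne,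
    norm_smul, Real.norm_eq_abs, mul_pow, sq_abs] at hlovasz
  nlinarith [hred.mu_sq_le hij, sq_nonneg ‖gso b i‖]

theorem monotone_two_pow_mul_norm_gso_sq :
    Monotone fun i : Fin n => 2 ^ (i : ℕ) * ‖gso b i‖ ^ 2 := by
  cases n with
  | zero => exact fun i => i.elim0
  | succ n =>
    refine Fin.monotone_iff_le_succ.mpr fun i => ?_
    have h := hred.norm_gso_sq_le_two_mul (i := i.castSucc) (j := i.succ) rfl
    simp only [Fin.val_castSucc, Fin.val_succ, pow_succ]
    nlinarith [pow_pos (two_pos : (0 : ℝ) < 2) (i : ℕ)]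

theorem norm_sq_le_two_pow_mul_norm_gso_sq (i : Fin n) :
    ‖b i‖ ^ 2 ≤ 2 ^ (i : ℕ) * ‖gso b i‖ ^ 2 := by
  set P := 2 ^ (i : ℕ) * ‖gso b i‖ ^ 2 with hP
  have hterm : ∀ l ∈ Iio i, mu b i l ^ 2 * ‖gso b l‖ ^ 2 ≤ P / 4 * (1 / 2) ^ (l : ℕ) := by
    intro l hl
    have hli := mem_Iio.mp hl
    have hpot := hred.monotone_two_pow_mul_norm_gso_sq hli.le
    have hhalf : (1 / 2 : ℝ) ^ (l : ℕ) * 2 ^ (l : ℕ) = 1 := by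
      rw [← mul_pow]; norm_num
    calc mu b i l ^ 2 * ‖gso b l‖ ^ 2 ≤ 1 / 4 * ‖gso b l‖ ^ 2 := by
          gcongr; exact hred.mu_sq_le hli
      _ = 1 / 4 * (2 ^ (l : ℕ) * ‖gso b l‖ ^ 2) * (1 / 2) ^ (l : ℕ) := by
          linear_combination (-(1 / 4) * ‖gso b l‖ ^ 2) * hhalf
      _ ≤ P / 4 * (1 / 2) ^ (l : ℕ) := by gcongr; linarith
  have hgeom : ∑ l ∈ Iio i, (1 / 2 : ℝ) ^ (l : ℕ) = 2 - 2 * (1 / 2) ^ (i : ℕ) := by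
    have h := sum_map (Iio i) Fin.valEmbedding fun s => (1 / 2 : ℝ) ^ s
    rw [Fin.map_valEmbedding_Iio, Nat.Iio_eq_range, geom_sum_eq (by norm_num)] at h
    simp only [Fin.valEmbedding_apply] at h
    rw [← h]
    ring
  have hhalf : P * (1 / 2) ^ (i : ℕ) = ‖gso b i‖ ^ 2 := by
    rw [hP, mul_comm, ← mul_assoc, ← mul_pow]; norm_num
  have hP1 : ‖gso b i‖ ^ 2 ≤ P := le_mul_of_one_le_left (sq_nonneg _) (one_le_pow₀ one_le_two)
  calc ‖b i‖ ^ 2 = ‖gso b i‖ ^ 2 + ∑ l ∈ Iio i, mu b i l ^ 2 * ‖gso b l‖ ^ 2 :=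
        norm_sq_eq_norm_gso_sq_add_sum b i
    _ ≤ ‖gso b i‖ ^ 2 + ∑ l ∈ Iio i, P / 4 * (1 / 2) ^ (l : ℕ) :=
        add_le_add_right (sum_le_sum hterm) _
    _ = ‖gso b i‖ ^ 2 + P / 4 * (2 - 2 * (1 / 2) ^ (i : ℕ)) := by rw [← mul_sum, hgeom]
    _ ≤ P := by linarith

end LLLReduced

section RowShears

variable {m n K : ℕ}

noncomputable def latticeVec (b : Fin n → EuclideanSpace ℝ (Fin m)) (c : Fin K → Fin n → ℤ) :
    Fin K → EuclideanSpace ℝ (Fin m) :=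
  fun j => ∑ i, (c j i : ℝ) • b i

def RowShear (c c' : Fin K → Fin n → ℤ) : Prop :=
  ∃ (j₁ j₂ : Fin K) (q : ℤ), j₁ ≠ j₂ ∧ c' = update c j₁ (c j₁ + q • c j₂)

theorem RowShear.mk {c : Fin K → Fin n → ℤ} {j₁ j₂ : Fin K} (h : j₁ ≠ j₂) (q : ℤ) :
    RowShear c (update c j₁ (c j₁ + q • c j₂)) :=
  ⟨j₁, j₂, q, h, rfl⟩

theorem latticeVec_update_add_smul (b : Fin n → EuclideanSpace ℝ (Fin m))
    (c : Fin K → Fin n → ℤ) (j₁ j₂ : Fin K) (q : ℤ) :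
    latticeVec b (update c j₁ (c j₁ + q • c j₂)) =
      update (latticeVec b c) j₁ (latticeVec b c j₁ + (q : ℝ) • latticeVec b c j₂) := by
  ext1 j
  rcases eq_or_ne j j₁ with rfl | hj
  · simp [latticeVec, add_smul, sum_add_distrib, smul_sum, smul_smul]
  · simp [latticeVec, hj]

theorem RowShear.det_gram {c c' : Fin K → Fin n → ℤ} (h : RowShear c c')
    (b : Fin n → EuclideanSpace ℝ (Fin m)) :
    (gram ℝ (latticeVec b c')).det = (gram ℝ (latticeVec b c)).det := by
  obtain ⟨j₁, j₂, q, hne, rfl⟩ := h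
  rw [latticeVec_update_add_smul, det_gram_update_add_smul _ hne]

theorem RowShear.eq_zero_of_col_eq_zero {c c' : Fin K → Fin n → ℤ} (h : RowShear c c')
    {i : Fin n} (hi : ∀ j, c j i = 0) (j : Fin K) : c' j i = 0 := by
  obtain ⟨j₁, j₂, q, -, rfl⟩ := h
  rcases eq_or_ne j j₁ with rfl | hj
  · simp [hi]
  · simp [hj, hi]

theorem RowShear.snoc {c c' : Fin K → Fin n → ℤ} (h : RowShear c c') (x : Fin n → ℤ) :
    RowShear (Fin.snoc c x : Fin (K + 1) → Fin n → ℤ) (Fin.snoc c' x) := by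
  obtain ⟨j₁, j₂, q, hne, rfl⟩ := h
  rw [Fin.snoc_update]
  simpa only [Fin.snoc_castSucc] using RowShear.mk (c := Fin.snoc c x)
    (Fin.castSucc_injective _ |>.ne hne) q

abbrev RowShears : (Fin K → Fin n → ℤ) → (Fin K → Fin n → ℤ) → Prop :=
  Relation.ReflTransGen RowShear

namespace RowShears

variable {c c' : Fin K → Fin n → ℤ} (h : RowShears c c')
include h

theorem det_gram (b : Fin n → EuclideanSpace ℝ (Fin m)) :
    (gram ℝ (latticeVec b c')).det = (gram ℝ (latticeVec b c)).det := by
  induction h with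
  | refl => rfl
  | tail _ hstep ih => exact (hstep.det_gram b).trans ih

theorem latticeDet (b : Fin n → EuclideanSpace ℝ (Fin m)) :
    latticeDet (latticeVec b c') = latticeDet (latticeVec b c) :=
  congrArg Real.sqrt (h.det_gram b)

theorem linearIndependent {b : Fin n → EuclideanSpace ℝ (Fin m)}
    (hc : LinearIndependent ℝ (latticeVec b c)) : LinearIndependent ℝ (latticeVec b c') := by
  rw [← det_gram_ne_zero_iff_linearIndependent] at hc ⊢
  rwa [h.det_gram]

theorem eq_zero_of_col_eq_zero {i : Fin n} (hi : ∀ j, c j i = 0) (j : Fin K) : c' j i = 0 := by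
  induction h generalizing j with
  | refl => exact hi j
  | tail _ hstep ih => exact hstep.eq_zero_of_col_eq_zero ih j

theorem snoc (x : Fin n → ℤ) :
    RowShears (Fin.snoc c x : Fin (K + 1) → Fin n → ℤ) (Fin.snoc c' x) := by
  induction h with
  | refl => rfl
  | tail _ hstep ih => exact ih.tail (hstep.snoc x)

end RowShears

end RowShears

section Echelon

variable {m n K : ℕ}

theorem sum_natAbs_update_emod_lt {v : Fin K → ℤ} {a a' : Fin K} (ha' : v a' ≠ 0)
    (hle : (v a').natAbs ≤ (v a).natAbs) :
    ∑ j, (update v a (v a % v a') j).natAbs < ∑ j, (v j).natAbs := by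
  have hlt : (v a % v a').natAbs < (v a').natAbs := by
    simpa only [Int.natAbs_abs] using
      Int.natAbs_lt_natAbs_of_nonneg_of_lt (Int.emod_nonneg (v a) ha') (Int.emod_lt_abs (v a) ha')
  simp only [apply_update (fun _ z => Int.natAbs z)]
  rw [sum_update_of_mem (mem_univ a), sum_eq_add_sum_sdiff_singleton_of_mem (mem_univ a)]
  omega

/-- Two shears move the only nonzero entry of a column to the last row, so row swaps are never
needed. -/
theorem exists_rowShears_single_pivot (c : Fin (K + 1) → Fin n → ℤ) {j₀ : Fin (K + 1)}
    {T : Fin n} (h₀ : c j₀ T ≠ 0) (hother : ∀ j, j ≠ j₀ → c j T = 0) :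
    ∃ c', RowShears c c' ∧ c' (Fin.last K) T ≠ 0 ∧ ∀ j, j ≠ Fin.last K → c' j T = 0 := by
  rcases eq_or_ne j₀ (Fin.last K) with rfl | hj₀
  · exact ⟨c, .refl, h₀, hother⟩
  have hlast : c (Fin.last K) T = 0 := hother _ hj₀.symm
  set c₁ := update c (Fin.last K) (c (Fin.last K) + (1 : ℤ) • c j₀)
  refine ⟨update c₁ j₀ (c₁ j₀ + (-1 : ℤ) • c₁ (Fin.last K)),
    .tail (.single (RowShear.mk hj₀.symm 1)) (RowShear.mk hj₀ (-1)), ?_, fun j hj => ?_⟩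
  · simp [c₁, hj₀.symm, hlast, h₀]
  · rcases eq_or_ne j j₀ with rfl | hj'
    · simp [c₁, hj, hlast]
    · simp [c₁, hj, hj', hother _ hj']

theorem exists_rowShears_pivot_last (c : Fin (K + 1) → Fin n → ℤ) (T : Fin n)
    (hT : ∃ j, c j T ≠ 0) :
    ∃ c', RowShears c c' ∧ c' (Fin.last K) T ≠ 0 ∧ ∀ j, j ≠ Fin.last K → c' j T = 0 := by
  by_cases hpair : ∃ a a', a ≠ a' ∧ c a' T ≠ 0 ∧ (c a' T).natAbs ≤ (c a T).natAbs
  · obtain ⟨a, a', haa', ha', hle⟩ := hpair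
    set c' := update c a (c a + (-(c a T / c a' T)) • c a')
    have hcol : (fun j => c' j T) = update (fun j => c j T) a (c a T % c a' T) := by
      ext1 j
      rcases eq_or_ne j a with rfl | hj
      · simp [c', Int.emod_def]; ring
      · simp [c', hj]
    have hdec : ∑ j, (c' j T).natAbs < ∑ j, (c j T).natAbs := by
      have h := sum_natAbs_update_emod_lt (v := fun j => c j T) ha' hle
      rwa [← hcol] at h
    obtain ⟨c'', h, hlast, hzero⟩ :=
      exists_rowShears_pivot_last c' T ⟨a', by simpa [c', haa'.symm] using ha'⟩
    exact ⟨c'', .head (RowShear.mk haa' _) h, hlast, hzero⟩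
  · simp only [not_exists, not_and, not_le] at hpair
    obtain ⟨j₀, h₀⟩ := hT
    refine exists_rowShears_single_pivot c h₀ fun j hj => ?_
    by_contra hj'
    exact (hpair j₀ j (Ne.symm hj) hj').not_gt (hpair j j₀ hj h₀)
termination_by ∑ j, (c j T).natAbs
decreasing_by exact hdec

structure IsEchelon (c : Fin K → Fin n → ℤ) (t : Fin K → Fin n) : Prop where
  strictMono : StrictMono t
  pivot_ne_zero : ∀ j, c j (t j) ≠ 0
  eq_zero_of_pivot_lt : ∀ j i, t j < i → c j i = 0

theorem IsEchelon.snoc {c : Fin K → Fin n → ℤ} {t : Fin K → Fin n} (hc : IsEchelon c t)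
    {x : Fin n → ℤ} {T : Fin n} (hxT : x T ≠ 0) (hx : ∀ i, T < i → x i = 0) (ht : ∀ j, t j < T) :
    IsEchelon (Fin.snoc c x : Fin (K + 1) → Fin n → ℤ) (Fin.snoc t T) where
  strictMono := by
    intro j j' hjj'
    induction j' using Fin.lastCases with
    | last =>
      obtain ⟨j, rfl⟩ := Fin.eq_castSucc_of_ne_last hjj'.ne
      simpa using ht j
    | cast j' =>
      obtain ⟨j, rfl⟩ := Fin.eq_castSucc_of_ne_last (hjj'.trans (Fin.castSucc_lt_last j')).ne
      simpa using hc.strictMono (Fin.castSucc_lt_castSucc_iff.mp hjj')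
  pivot_ne_zero j := by
    induction j using Fin.lastCases with
    | last => simpa using hxT
    | cast j => simpa using hc.pivot_ne_zero j
  eq_zero_of_pivot_lt j := by
    induction j using Fin.lastCases with
    | last => simpa using hx
    | cast j => simpa using hc.eq_zero_of_pivot_lt j

theorem exists_max_col_ne_zero {c : Fin K → Fin n → ℤ} {j : Fin K} {i : Fin n} (h : c j i ≠ 0) :
    ∃ T, (∃ j, c j T ≠ 0) ∧ ∀ i, T < i → ∀ j, c j i = 0 := by
  set s := univ.filter fun i => ∃ j, c j i ≠ 0
  obtain ⟨T, hT, hmax⟩ := s.exists_max_image id ⟨i, by simpa [s] using ⟨j, h⟩⟩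
  refine ⟨T, by simpa [s] using hT, fun i hi j => ?_⟩
  by_contra hne
  exact (hmax i (by simpa [s] using ⟨j, hne⟩)).not_gt hi

theorem exists_rowShears_isEchelon (b : Fin n → EuclideanSpace ℝ (Fin m)) :
    ∀ {K : ℕ} (c : Fin K → Fin n → ℤ), LinearIndependent ℝ (latticeVec b c) →
      ∃ c' t, RowShears c c' ∧ IsEchelon c' t
  | 0, c, _ => ⟨c, Fin.elim0, .refl, ⟨fun a => a.elim0, fun j => j.elim0, fun j => j.elim0⟩⟩
  | K + 1, c, hc => by
    obtain ⟨i, hi⟩ : ∃ i, c (Fin.last K) i ≠ 0 := by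
      by_contra! h
      exact hc.ne_zero (Fin.last K) (by simp [latticeVec, h])
    obtain ⟨T, hT, htop⟩ := exists_max_col_ne_zero hi
    obtain ⟨c₁, hcc₁, hlast, hzero⟩ := exists_rowShears_pivot_last c T hT
    have htop₁ : ∀ i, T < i → ∀ j, c₁ j i = 0 := fun i hi =>
      hcc₁.eq_zero_of_col_eq_zero (htop i hi)
    obtain ⟨c₂, t, hc₁c₂, hech⟩ := exists_rowShears_isEchelon b (Fin.init c₁)
      ((hcc₁.linearIndependent hc).comp _ (Fin.castSucc_injective K))
    have ht : ∀ j, t j < T := by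
      intro j
      by_contra! hle
      refine hech.pivot_ne_zero j (hc₁c₂.eq_zero_of_col_eq_zero (fun j' => ?_) j)
      rcases hle.eq_or_lt with heq | hlt
      · exact heq ▸ hzero _ (Fin.castSucc_lt_last j').ne
      · exact htop₁ _ hlt _
    refine ⟨Fin.snoc c₂ (c₁ (Fin.last K)), Fin.snoc t T, ?_, hech.snoc hlast (htop₁ · · _) ht⟩
    have hsnoc := hc₁c₂.snoc (c₁ (Fin.last K))
    rw [Fin.snoc_init_self] at hsnoc
    exact hcc₁.trans hsnoc

end Echelon

section Pivot

variable {m n K : ℕ}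

theorem inner_gso_eq_inner_of_forall_lt (f : Fin K → EuclideanSpace ℝ (Fin m))
    {v : EuclideanSpace ℝ (Fin m)} {i : Fin K} (h : ∀ j < i, ⟪f j, v⟫ = 0) :
    ⟪gso f i, v⟫ = ⟪f i, v⟫ := by
  have hperp : ∀ l < i, ⟪gso f l, v⟫ = 0 := by
    intro l hl
    have hspan : Submodule.span ℝ (f '' Set.Iic l) ≤ (ℝ ∙ v)ᗮ := by
      refine Submodule.span_le.mpr ?_
      rintro _ ⟨j, hj, rfl⟩
      exact Submodule.mem_orthogonal_singleton_iff_inner_left.mpr (h j (lt_of_le_of_lt hj hl))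
    exact Submodule.mem_orthogonal_singleton_iff_inner_left.mp
      (hspan (gramSchmidt_mem_span ℝ f le_rfl))
  rw [← sum_gsoCoeff_smul_gso f i,
    sum_gsoCoeff f (fun r l => r • gso f l) (fun _ => zero_smul _ _), one_smul, inner_add_left,
    sum_inner,
    sum_eq_zero fun l hl => by rw [real_inner_smul_left, hperp l (mem_Iio.mp hl), mul_zero],
    add_zero]

theorem inner_sum_smul_gso (b : Fin n → EuclideanSpace ℝ (Fin m)) {a : Fin n → ℝ} {t : Fin n}
    (ha : ∀ i, t < i → a i = 0) : ⟪∑ i, a i • b i, gso b t⟫ = a t * ‖gso b t‖ ^ 2 := by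
  rw [sum_inner, sum_eq_single t, real_inner_smul_left, inner_gso_self]
  · intro i _ hi
    rcases hi.lt_or_gt with hlt | hgt
    · rw [real_inner_smul_left, inner_gso_eq_zero_of_lt b hlt, mul_zero]
    · rw [ha i hgt, zero_smul, inner_zero_left]
  · simp

theorem IsEchelon.norm_gso_le (b : Fin n → EuclideanSpace ℝ (Fin m)) {c : Fin K → Fin n → ℤ}
    {t : Fin K → Fin n} (hc : IsEchelon c t) (j : Fin K) :
    ‖gso b (t j)‖ ≤ ‖gso (latticeVec b c) j‖ := by
  set v := gso b (t j)
  have hinner : ∀ j' ≤ j, ⟪latticeVec b c j', v⟫ = c j' (t j) * ‖v‖ ^ 2 := fun j' hj' =>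
    inner_sum_smul_gso b fun i hi => by
      rw [hc.eq_zero_of_pivot_lt j' i ((hc.strictMono.monotone hj').trans_lt hi), Int.cast_zero]
  have hpivot : ⟪gso (latticeVec b c) j, v⟫ = c j (t j) * ‖v‖ ^ 2 := by
    rw [inner_gso_eq_inner_of_forall_lt _ fun j' hj' => ?_, hinner j le_rfl]
    rw [hinner j' hj'.le, hc.eq_zero_of_pivot_lt j' _ (hc.strictMono hj'), Int.cast_zero, zero_mul]
  have hone : (1 : ℝ) ≤ |(c j (t j) : ℝ)| := by
    exact_mod_cast Int.one_le_abs (hc.pivot_ne_zero j)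
  rcases (norm_nonneg v).eq_or_lt with h0 | hpos
  · rw [← h0]
    exact norm_nonneg _
  refine le_of_mul_le_mul_right ?_ hpos
  calc ‖v‖ * ‖v‖ ≤ |(c j (t j) : ℝ)| * ‖v‖ ^ 2 := by nlinarith
    _ = |⟪gso (latticeVec b c) j, v⟫| := by rw [hpivot, abs_mul, abs_of_nonneg (sq_nonneg ‖v‖)]
    _ ≤ ‖gso (latticeVec b c) j‖ * ‖v‖ := abs_real_inner_le_norm _ _

end Pivot

theorem Fin.val_le_val_apply_of_strictMono {k n : ℕ} {t : Fin k → Fin n} (ht : StrictMono t)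
    (j : Fin k) : (j : ℕ) ≤ t j := by
  have h := card_le_card_of_injOn t (s := Iio j) (t := Iio (t j))
    (fun i hi => by simpa using ht (by simpa using hi)) ht.injective.injOn
  rwa [Fin.card_Iio, Fin.card_Iio] at h

theorem Fin.val_apply_le_of_strictMono {k n : ℕ} {t : Fin k → Fin n} (ht : StrictMono t)
    (j : Fin k) : (t j : ℕ) ≤ n - k + j := by
  have h := card_le_card_of_injOn t (s := Ioi j) (t := Ioi (t j))
    (fun i hi => by simpa using ht (by simpa using hi)) ht.injective.injOn
  rw [Fin.card_Ioi, Fin.card_Ioi] at h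
  omega

theorem le_two_rpow_half_mul_of_sq_le {x y : ℝ} {N : ℕ} (hx : 0 ≤ x) (hy : 0 ≤ y)
    (h : x ^ 2 ≤ 2 ^ N * y ^ 2) : x ≤ 2 ^ ((N : ℝ) / 2) * y := by
  have hsqrt : (2 : ℝ) ^ ((N : ℝ) / 2) * y = √(2 ^ N * y ^ 2) := by
    rw [Real.sqrt_mul (by positivity), Real.sqrt_sq hy, Real.sqrt_eq_rpow, ← Real.rpow_natCast,
      ← Real.rpow_mul zero_le_two, mul_one_div]
  rw [hsqrt]
  exact (Real.le_sqrt hx (by positivity)).mpr h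

theorem LLLReduced.norm_le_of_isEchelon {m n k : ℕ} {b : Fin n → EuclideanSpace ℝ (Fin m)}
    (hred : LLLReduced b) {c : Fin k → Fin n → ℤ} {t : Fin k → Fin n} (hc : IsEchelon c t)
    (hkn : k ≤ n) (j : Fin k) :
    ‖b (Fin.castLE hkn j)‖ ≤ 2 ^ (((n - k + j : ℕ) : ℝ) / 2) * ‖gso (latticeVec b c) j‖ := by
  refine le_two_rpow_half_mul_of_sq_le (norm_nonneg _) (norm_nonneg _) ?_
  calc ‖b (Fin.castLE hkn j)‖ ^ 2 ≤ 2 ^ (j : ℕ) * ‖gso b (Fin.castLE hkn j)‖ ^ 2 :=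
        hred.norm_sq_le_two_pow_mul_norm_gso_sq _
    _ ≤ 2 ^ (t j : ℕ) * ‖gso b (t j)‖ ^ 2 :=
        hred.monotone_two_pow_mul_norm_gso_sq
          (show Fin.castLE hkn j ≤ t j from Fin.val_le_val_apply_of_strictMono hc.strictMono j)
    _ ≤ 2 ^ (n - k + j) * ‖gso (latticeVec b c) j‖ ^ 2 := by
        gcongr
        · exact one_le_two
        · exact Fin.val_apply_le_of_strictMono hc.strictMono j
        · exact hc.norm_gso_le b j

theorem prod_two_rpow_half {n k : ℕ} (hkn : k ≤ n) :
    ∏ j : Fin k, (2 : ℝ) ^ (((n - k + j : ℕ) : ℝ) / 2) =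
      2 ^ ((k : ℝ) * ((n : ℝ) - k) / 2 + (k : ℝ) * ((k : ℝ) - 1) / 4) := by
  have hgauss : ∀ r : ℕ, ∑ j ∈ range r, (j : ℝ) = r * (r - 1) / 2 := by
    intro r
    induction r with
    | zero => simp
    | succ r ih => rw [sum_range_succ, ih]; push_cast; ring
  rw [← Real.rpow_sum_of_pos two_pos]
  congr 1
  rw [Fin.sum_univ_eq_sum_range (fun j => ((n - k + j : ℕ) : ℝ) / 2)]
  push_cast [Nat.cast_sub hkn]
  rw [← sum_div, sum_add_distrib, sum_const, card_range, nsmul_eq_mul, hgauss]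
  ring

theorem prod_norm_le_sublattice_det_general {m n k : ℕ} (hkn : k ≤ n)
    (b : Fin n → EuclideanSpace ℝ (Fin m))
    (hred : LLLReduced b)
    (d : Fin k → EuclideanSpace ℝ (Fin m))
    (hd : LinearIndependent ℝ d) (hdL : ∀ i, inLattice b (d i)) :
    ∏ i : Fin k, ‖b (Fin.castLE hkn i)‖ ≤
      2 ^ ((k : ℝ) * ((n : ℝ) - k) / 2 + (k : ℝ) * ((k : ℝ) - 1) / 4) * latticeDet d := by
  choose c hc using hdL
  obtain rfl : d = latticeVec b c := funext hc
  obtain ⟨c', t, hcc', hech⟩ := exists_rowShears_isEchelon b c hd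
  calc ∏ j, ‖b (Fin.castLE hkn j)‖
      ≤ ∏ j : Fin k, 2 ^ (((n - k + j : ℕ) : ℝ) / 2) * ‖gso (latticeVec b c') j‖ :=
        prod_le_prod (fun _ _ => norm_nonneg _) fun j _ => hred.norm_le_of_isEchelon hech hkn j
    _ = _ := by
        rw [prod_mul_distrib, prod_two_rpow_half hkn, ← latticeDet_eq_prod_norm_gso,
          hcc'.latticeDet]

theorem prod_norm_le_sublattice_det {m n k : ℕ} (hk1 : 1 ≤ k) (hkn : k ≤ n)
    (b : Fin n → EuclideanSpace ℝ (Fin m))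
    (hb : LinearIndependent ℝ b) (hred : LLLReduced b)
    (d : Fin k → EuclideanSpace ℝ (Fin m))
    (hd : LinearIndependent ℝ d) (hdL : ∀ i, inLattice b (d i)) :
    ∏ i : Fin k, ‖b (Fin.castLE hkn i)‖ ≤
      2 ^ ((k : ℝ) * ((n : ℝ) - k) / 2 + (k : ℝ) * ((k : ℝ) - 1) / 4) * latticeDet d :=
  prod_norm_le_sublattice_det_general hkn b hred d hd hdL
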